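/- Over a domestic string algebra, a band b cannot overlap two shifted copies of itself in a string: there is no string of the form u = b' b'' b''' where b = b' b'' = b'' b''' with b'', b' nonempty proper (i.e. two copies of b overlapping in a strictly longer string). -/

import Mathlib

/-!
Combinatorics of strings and bands over a string algebra, presented abstractly:
a string algebra `KQ/I` is recorded by its quiver (vertices, arrows with source and
target) together with the relation `comp b a`, meaning that the length-two path
"`a` followed by `b`" does not lie in the monomial ideal `I`.  The defining conditions
of a string algebra are recorded as fields.
-/

/-- Combinatorial data of a string algebra. -/
structure StringData where
  /-- vertices -/
  V : Type
  /-- arrows -/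
  A : Type
  /-- source of an arrow -/
  s : A → V
  /-- target of an arrow -/
  t : A → V
  /-- `comp b a` : the composite path "`a` then `b`" avoids the monomial relations -/
  comp : A → A → Prop
  comp_st : ∀ a b : A, comp b a → s b = t a
  /-- every vertex has at most two incoming arrows -/
  two_in : ∀ (v : V) (a b c : A), t a = v → t b = v → t c = v → a = b ∨ a = c ∨ b = c
  /-- every vertex has at most two outgoing arrows -/
  two_out : ∀ (v : V) (a b c : A), s a = v → s b = v → s c = v → a = b ∨ a = c ∨ b = c
  /-- for every arrow there is at most one arrow that may follow it -/
  uniq_left : ∀ a b b' : A, comp b a → comp b' a → b = b'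
  /-- for every arrow there is at most one arrow that it may follow -/
  uniq_right : ∀ a g g' : A, comp a g → comp a g' → g = g'

namespace StringData

variable (D : StringData)

/-- A letter is a direct arrow (`Sum.inl`) or an inverse arrow (`Sum.inr`). -/
abbrev Letter := D.A ⊕ D.A

/-- `Adj l l'` : the letter `l` may be immediately followed (to the right, reading a
string from left to right) by the letter `l'`, avoiding relations and immediate
backtracks. -/
def Adj : D.Letter → D.Letter → Prop
  | Sum.inl a, Sum.inl a' => D.comp a a'
  | Sum.inl a, Sum.inr b => a ≠ b ∧ D.s a = D.s b
  | Sum.inr b, Sum.inl a => b ≠ a ∧ D.t b = D.t a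
  | Sum.inr b, Sum.inr b' => D.comp b' b

/-- A string: a nonempty reduced walk avoiding the relations. -/
def IsString (w : List D.Letter) : Prop :=
  w ≠ [] ∧ w.Chain' D.Adj

/-- The `k`-th power of a word. -/
def wpow {X : Type*} (w : List X) (k : ℕ) : List X :=
  (List.replicate k w).flatten

/-- The formal inverse of a letter. -/
def linv : D.Letter → D.Letter := Sum.elim Sum.inr Sum.inl

/-- The formal inverse of a word. -/
def winv (w : List D.Letter) : List D.Letter := (w.map D.linv).reverse

/-- `IsRotation u v` : `v` is a cyclic permutation (rotation) of `u`. -/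
def IsRotation {X : Type*} (u v : List X) : Prop :=
  ∃ p q : List X, u = p ++ q ∧ v = q ++ p

/-- A band: a string of the form `α ⋯ β⁻¹` (starting with a direct letter and ending
with an inverse letter), which closes up cyclically (so that all of its rotations are
strings) and which is primitive, i.e. not a proper power. -/
def IsBand (w : List D.Letter) : Prop :=
  D.IsString w ∧
  (∃ (a : D.A) (x : List D.Letter) (b : D.A), w = Sum.inl a :: (x ++ [Sum.inr b])) ∧
  (∃ l l' : D.Letter, w.getLast? = some l ∧ w.head? = some l' ∧ D.Adj l l') ∧
  (∀ (v : List D.Letter) (k : ℕ), w = wpow v k → k = 1)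

/-- A string algebra is domestic when it has only finitely many bands. -/
def Domestic : Prop := {w : List D.Letter | D.IsBand w}.Finite

end StringData

/-!
Write `b = p m` with `m` also a prefix of `b`. Both `p` and `m` begin with the first letter
`α` of `b` and `m` ends with its last letter `β⁻¹`, so the junctions `p | m` and `m | p` of the
cyclic word `b` show that each of `p`, `m` may be followed by `p` or by `m`. Hence every word
`pⁿ m` is a cyclic string of the shape `α ⋯ β⁻¹`, and its primitive root is a band. By domesticity two of
these roots coincide: `pⁿ m = rʲ` and `pⁿ' m = rʲ'` with `n < n'`. Then `p ^ (n' - n)` is a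
power of the primitive word `r`, so by the periodicity lemma `p` is a power of `r`; hence so
are `m` and `b = p m`, and `b` is not primitive.
-/

namespace StringData

open List

section Words

variable {X : Type*}

@[simp]
theorem wpow_zero (w : List X) : wpow w 0 = [] := rfl

theorem wpow_succ (w : List X) (k : ℕ) : wpow w (k + 1) = w ++ wpow w k := by
  simp [wpow, replicate_succ]

@[simp]
theorem wpow_one (w : List X) : wpow w 1 = w := by
  simp [wpow_succ]

@[simp]
theorem wpow_nil (k : ℕ) : wpow ([] : List X) k = [] := by
  simp [wpow]

theorem wpow_add (w : List X) (a b : ℕ) : wpow w (a + b) = wpow w a ++ wpow w b := by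
  simp only [wpow, replicate_add, flatten_append]

theorem wpow_succ' (w : List X) (k : ℕ) : wpow w (k + 1) = wpow w k ++ w := by
  rw [wpow_add, wpow_one]

theorem wpow_mul (w : List X) (a b : ℕ) : wpow w (a * b) = wpow (wpow w a) b := by
  induction b with
  | zero => rfl
  | succ b ih => rw [Nat.mul_succ, Nat.add_comm, wpow_add, ih, wpow_succ]

@[simp]
theorem length_wpow (w : List X) (k : ℕ) : (wpow w k).length = k * w.length := by
  simp [wpow, length_flatten]

@[simp]
theorem wpow_eq_nil_iff {w : List X} {k : ℕ} : wpow w k = [] ↔ k = 0 ∨ w = [] := by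
  rw [← length_eq_zero_iff, length_wpow, Nat.mul_eq_zero, length_eq_zero_iff]

theorem head?_wpow {w : List X} {k : ℕ} (hk : k ≠ 0) : (wpow w k).head? = w.head? :=
  head?_flatten_replicate hk w

theorem getLast?_wpow {w : List X} {k : ℕ} (hk : k ≠ 0) :
    (wpow w k).getLast? = w.getLast? :=
  getLast?_flatten_replicate hk w

theorem take_length_wpow {w : List X} {k : ℕ} (hk : k ≠ 0) : (wpow w k).take w.length = w := by
  obtain ⟨k, rfl⟩ := Nat.exists_eq_succ_of_ne_zero hk
  rw [wpow_succ, take_left]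

theorem hasPeriod_wpow (w : List X) (k : ℕ) : (wpow w k).HasPeriod w.length := by
  rcases Nat.eq_zero_or_pos k with rfl | hk
  · simp
  rw [HasPeriod, take_length_wpow hk.ne', ← wpow_succ, wpow_succ']
  exact prefix_append _ _

theorem take_mul_eq_wpow_of_hasPeriod {w : List X} {d : ℕ} (hw : w.HasPeriod d) :
    ∀ {t : ℕ}, d * t ≤ w.length → w.take (d * t) = wpow (w.take d) t
  | 0, _ => by simp
  | t + 1, ht => by
    have hdrop : (w.drop d).take (d * t) = w.take (d * t) := by
      rw [prefix_iff_eq_take.mp hw.drop_prefix, take_take, length_drop,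
        Nat.min_eq_left (by rw [Nat.mul_succ] at ht; omega)]
    rw [Nat.mul_succ, Nat.add_comm, take_add, hdrop,
      take_mul_eq_wpow_of_hasPeriod hw (by rw [Nat.mul_succ] at ht; omega), wpow_succ]

theorem le_of_length_wpow_le {r : List X} (hr : r ≠ []) {k j : ℕ}
    (h : (wpow r k).length ≤ (wpow r j).length) : k ≤ j := by
  simp only [length_wpow] at h
  exact Nat.le_of_mul_le_mul_right h (length_pos_iff.mpr hr)

theorem eq_wpow_of_wpow_append_eq_wpow {r x : List X} {k j : ℕ}
    (h : wpow r k ++ x = wpow r j) : x = wpow r (j - k) := by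
  rcases eq_or_ne r [] with rfl | hr
  · simpa using h
  have hkj : k ≤ j := le_of_length_wpow_le hr (by simp [← h])
  rw [← Nat.add_sub_cancel' hkj, wpow_add] at h
  exact append_cancel_left h

theorem eq_wpow_of_append_wpow_eq_wpow {r x : List X} {k j : ℕ}
    (h : x ++ wpow r k = wpow r j) : x = wpow r (j - k) := by
  rcases eq_or_ne r [] with rfl | hr
  · simpa using h
  have hkj : k ≤ j := le_of_length_wpow_le hr (by simp [← h])
  rw [← Nat.sub_add_cancel hkj, wpow_add] at h
  exact append_cancel_right h

def IsPrimitive (w : List X) : Prop := ∀ (v : List X) (k : ℕ), w = wpow v k → k = 1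

theorem IsPrimitive.ne_nil {w : List X} (hw : IsPrimitive w) : w ≠ [] := by
  rintro rfl
  simpa using hw [] 2 (by simp)

theorem exists_isPrimitive_eq_wpow {w : List X} (hw : w ≠ []) :
    ∃ r j, IsPrimitive r ∧ w = wpow r j := by
  induction hn : w.length using Nat.strong_induction_on generalizing w with
  | _ n ih =>
    by_cases hprim : IsPrimitive w
    · exact ⟨w, 1, hprim, (wpow_one w).symm⟩
    obtain ⟨v, k, rfl, hk⟩ : ∃ v k, w = wpow v k ∧ k ≠ 1 := by
      simpa [IsPrimitive] using hprim
    have hv : v ≠ [] ∧ k ≠ 0 := by simpa [and_comm] using hw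
    have hlt : v.length < n := by
      rw [← hn, length_wpow]
      have := length_pos_iff.mpr hv.1
      exact Nat.lt_of_lt_of_le (by omega) (Nat.mul_le_mul_right _ (by omega : 2 ≤ k))
    obtain ⟨r, j, hr, rfl⟩ := ih _ hlt hv.1 rfl
    exact ⟨r, j * k, hr, (wpow_mul r j k).symm⟩

theorem IsPrimitive.exists_eq_wpow_of_wpow_eq {r p : List X} (hr : IsPrimitive r) {i j : ℕ}
    (hi : i ≠ 0) (h : wpow p i = wpow r j) : ∃ α, p = wpow r α := by
  rcases eq_or_ne p [] with rfl | hp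
  · exact ⟨0, rfl⟩
  have hj : j ≠ 0 := by rintro rfl; simp [hi, hp] at h
  obtain ⟨W, hWp, hWr⟩ : ∃ W, W = wpow p (i + i) ∧ W = wpow r (j + j) :=
    ⟨_, rfl, by rw [wpow_add, h, ← wpow_add]⟩
  have hlen : p.length + r.length ≤ W.length := by
    have hij : i * p.length = j * r.length := by simpa using congrArg length h
    have := Nat.le_mul_of_pos_left p.length (Nat.pos_of_ne_zero hi)
    have := Nat.le_mul_of_pos_left r.length (Nat.pos_of_ne_zero hj)
    rw [hWp, length_wpow, Nat.add_mul]
    omega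
  have hg : W.HasPeriod (p.length.gcd r.length) :=
    (hWp ▸ hasPeriod_wpow p _).gcd (hWr ▸ hasPeriod_wpow r _) (by omega)
  have hr_take : W.take r.length = r := by rw [hWr, take_length_wpow (by omega)]
  have hgr : p.length.gcd r.length = r.length := by
    have hdvd := Nat.gcd_dvd_right p.length r.length
    have hpow := take_mul_eq_wpow_of_hasPeriod hg (t := r.length / p.length.gcd r.length)
      (by rw [Nat.mul_div_cancel' hdvd]; omega)
    rw [Nat.mul_div_cancel' hdvd, hr_take] at hpow
    simpa [hr _ _ hpow] using Nat.mul_div_cancel' hdvd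
  have hrp : r.length ∣ p.length := hgr ▸ Nat.gcd_dvd_left _ _
  refine ⟨p.length / r.length, ?_⟩
  have hpow := take_mul_eq_wpow_of_hasPeriod (hgr ▸ hg) (t := p.length / r.length)
    (by rw [Nat.mul_div_cancel' hrp]; omega)
  rwa [Nat.mul_div_cancel' hrp, hWp, take_length_wpow (by omega), ← hWp, hr_take] at hpow

theorem not_isPrimitive_append_of_wpow_append_eq {p m r : List X} (hp : p ≠ []) (hm : m ≠ [])
    (hr : IsPrimitive r) {n n' j j' : ℕ} (hn : n < n') (hj : wpow p n ++ m = wpow r j)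
    (hj' : wpow p n' ++ m = wpow r j') : ¬ IsPrimitive (p ++ m) := by
  have hstep : wpow p (n' - n) ++ wpow r j = wpow r j' := by
    rw [← hj, ← append_assoc, ← wpow_add, Nat.sub_add_cancel hn.le, hj']
  obtain ⟨α, rfl⟩ := hr.exists_eq_wpow_of_wpow_eq (by omega)
    (eq_wpow_of_append_wpow_eq_wpow hstep)
  rw [← wpow_mul] at hj
  have hm' := eq_wpow_of_wpow_append_eq_wpow hj
  have hα : α ≠ 0 := by rintro rfl; simp at hp
  have he : j - α * n ≠ 0 := by rintro he; simp [hm', he] at hm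
  intro hprim
  have := hprim r _ (by rw [hm', ← wpow_add])
  omega

theorem head?_wpow_append {p m : List X} (h : p.head? = m.head?) (n : ℕ) :
    (wpow p n ++ m).head? = m.head? := by
  induction n with
  | zero => simp
  | succ n ih => rw [wpow_succ, append_assoc, head?_append, ih, h, Option.or_self]

theorem isChain_wpow_append {R : X → X → Prop} {p m : List X} (hp : p.IsChain R)
    (hm : m.IsChain R) (hhead : p.head? = m.head?)
    (hjoin : ∀ x ∈ p.getLast?, ∀ y ∈ m.head?, R x y) (n : ℕ) :
    (wpow p n ++ m).IsChain R := by
  induction n with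
  | zero => simpa
  | succ n ih =>
    rw [wpow_succ, append_assoc, isChain_append, head?_wpow_append hhead]
    exact ⟨hp, ih, hjoin⟩

theorem exists_eq_cons_append_of_head?_of_getLast? {w : List X} {x y : X} (hxy : x ≠ y)
    (hx : w.head? = some x) (hy : w.getLast? = some y) : ∃ v, w = x :: (v ++ [y]) := by
  have hw := dropLast_append_getLast? y hy
  rcases hd : w.dropLast with _ | ⟨z, v⟩
  · rw [← hw, hd] at hx
    exact absurd (Option.some_injective _ hx).symm hxy
  · rw [← hw, hd] at hx
    obtain rfl : z = x := Option.some_injective _ hx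
    exact ⟨v, by rw [← hw, hd]; rfl⟩

end Words

variable {D : StringData}

theorem isBand_of_eq_wpow {w r : List D.Letter} {j : ℕ} {a c : D.A} (hw : w.IsChain D.Adj)
    (hhead : w.head? = some (.inl a)) (hlast : w.getLast? = some (.inr c))
    (hclose : D.Adj (.inr c) (.inl a)) (hr : IsPrimitive r) (hwr : w = wpow r j) :
    D.IsBand r := by
  have hj : j ≠ 0 := by rintro rfl; simp [hwr] at hhead
  rw [hwr, head?_wpow hj] at hhead
  rw [hwr, getLast?_wpow hj] at hlast
  obtain ⟨v, hv⟩ := exists_eq_cons_append_of_head?_of_getLast? Sum.inl_ne_inr hhead hlast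
  have hpre : r <+: w := by
    rw [hwr, ← Nat.succ_pred_eq_of_ne_zero hj, wpow_succ]
    exact prefix_append _ _
  exact ⟨⟨hr.ne_nil, hw.prefix hpre⟩, ⟨a, v, c, hv⟩, ⟨_, _, hlast, hhead, hclose⟩, hr⟩

end StringData

open StringData List in
/-- Over a domestic string algebra, two copies of a band `b` cannot properly overlap in
a string: there is no string `u = p ++ m ++ q` with `b = p ++ m = m ++ q` and `p`, `m`
nonempty proper. -/
theorem band_not_overlap_self (D : StringData) (hdom : D.Domestic)
    (b : List D.Letter) (hb : D.IsBand b) :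
    ¬ ∃ p m q : List D.Letter, p ≠ [] ∧ m ≠ [] ∧ b = p ++ m ∧ b = m ++ q ∧
        D.IsString (p ++ m ++ q) := by
  rintro ⟨p, m, q, hp, hm, rfl, hmq, -⟩
  obtain ⟨⟨-, hchain⟩, ⟨a, x, c, hshape⟩, ⟨l, l', hl, hl', hclose⟩, hprim⟩ := hb
  have hhead : (p ++ m).head? = some (.inl a) := by rw [hshape]; rfl
  have hlast : (p ++ m).getLast? = some (.inr c) := by
    rw [hshape, ← cons_append, getLast?_concat]
  obtain rfl : l = .inr c := Option.some_injective _ (hl.symm.trans hlast)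
  obtain rfl : l' = .inl a := Option.some_injective _ (hl'.symm.trans hhead)
  obtain ⟨hpc, hmc, hjoin⟩ := isChain_append.mp hchain
  have hmhead : m.head? = some (.inl a) := by rwa [hmq, head?_append_of_ne_nil _ hm] at hhead
  have hphead : p.head? = m.head? := by rwa [head?_append_of_ne_nil _ hp, ← hmhead] at hhead
  have hmlast : m.getLast? = some (.inr c) := by rwa [getLast?_append_of_ne_nil _ hm] at hlast
  choose r j hr hrj using fun n => exists_isPrimitive_eq_wpow (w := wpow p n ++ m) (by simp [hm])
  have hband (n : ℕ) : D.IsBand (r n) :=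
    isBand_of_eq_wpow (isChain_wpow_append hpc hmc hphead hjoin n)
      (by rw [head?_wpow_append hphead, hmhead]) (by rwa [getLast?_append_of_ne_nil _ hm])
      hclose (hr n) (hrj n)
  obtain ⟨n, n', hn, heq⟩ := hdom.exists_lt_map_eq_of_forall_mem hband
  exact not_isPrimitive_append_of_wpow_append_eq hp hm (hr n') hn (heq ▸ hrj n) (hrj n') hprim
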